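/- arXiv:0805.1284 — 4 statements merged into one kernel-verified Lean document; each statement's English description precedes it below -/
import Mathlib

section
/- Let T^ν be the ν-dimensional torus, w2 : (T^ν)² → ℝ, w3 : (T^ν)³ → ℝ and v3 : T^ν → ℝ be continuous functions. Fix p, q ∈ T^ν and let h3(p,q) be the bounded self-adjoint operator on ℂ ⊕ L²(T^ν) given by h3(p,q)(f0, f1) = (w2(p,q) f0 + ∫_{T^ν} v3(s) f1(s) ds, t ↦ v3(t) f0 + w3(p,q,t) f1(t)). Then for any z ∈ ℂ with z ∉ [min_t w3(p,q,t), max_t w3(p,q,t)], z is an eigenvalue of h3(p,q) if and only if Δ3(p,q;z) := w2(p,q) − z − ∫_{T^ν} v3(s)²/(w3(p,q,s) − z) ds = 0. -/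
/-!
An eigenvector `(f₀, f₁)` for `z` off the range of `w := w3(p,q,·)` has `f₁ = f₀ · v/(z - w)` from
the second component of the eigenvalue equation, so `f₀ ≠ 0`, and substituting into the first
component leaves `f₀ · Δ3(p,q;z) = 0`. Conversely, if `Δ3(p,q;z) = 0` then `(1, v/(z - w))` is an
eigenvector; it lies in `L²` because `z - w` is continuous and nonvanishing on the compact torus.
-/

open MeasureTheory

noncomputable section

instance : Fact (0 < 2 * Real.pi) := ⟨by positivity⟩

/-- The ν-dimensional torus with normalized Haar (Lebesgue) measure. -/
abbrev Torus (ν : ℕ) := Fin ν → AddCircle (2 * Real.pi)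

/-- `L²(T^ν)`. -/
abbrev L2T (ν : ℕ) := Lp ℂ 2 (volume : Measure (Torus ν))

section FriedrichsModel

variable {X : Type*} [MeasurableSpace X] {μ : Measure X}

/-- `H` acts as a Friedrichs model on `ℂ ⊕ L²(μ)`; `a`, `v`, `w` play the roles of `w2(p,q)`,
`v3`, `w3(p,q,·)`. -/
def IsFriedrichsModel (H : ℂ × Lp ℂ 2 μ → ℂ × Lp ℂ 2 μ) (a : ℂ) (v w : X → ℂ) : Prop :=
  ∀ f : ℂ × Lp ℂ 2 μ, (H f).1 = a * f.1 + ∫ t, v t * f.2 t ∂μ ∧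
    ((H f).2 : X → ℂ) =ᵐ[μ] fun t => v t * f.1 + w t * f.2 t

variable (μ) in
def fredholmDet (a : ℂ) (v w : X → ℂ) (z : ℂ) : ℂ :=
  a - z - ∫ t, v t ^ 2 / (w t - z) ∂μ

lemma integral_mul_div_sub_eq_neg (v w : X → ℂ) (z : ℂ) :
    ∫ t, v t * (v t / (z - w t)) ∂μ = -∫ t, v t ^ 2 / (w t - z) ∂μ := by
  rw [← integral_neg]
  congr 1 with t
  rw [← neg_sub, div_neg]
  ring

namespace IsFriedrichsModel

variable {H : ℂ × Lp ℂ 2 μ → ℂ × Lp ℂ 2 μ} {a z : ℂ} {v w : X → ℂ}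

lemma snd_ae_eq_of_eigen (hH : IsFriedrichsModel H a v w) (hw : ∀ t, w t ≠ z)
    {f : ℂ × Lp ℂ 2 μ} (hf : H f = z • f) :
    (f.2 : X → ℂ) =ᵐ[μ] fun t => f.1 * (v t / (z - w t)) := by
  have hsnd : ((H f).2 : X → ℂ) =ᵐ[μ] z • (f.2 : X → ℂ) := hf ▸ Lp.coeFn_smul z f.2
  filter_upwards [(hH f).2, hsnd] with t hact hsmul
  have hzw : z - w t ≠ 0 := sub_ne_zero.mpr (hw t).symm
  rw [mul_div_assoc', eq_div_iff hzw]
  have : v t * f.1 + w t * f.2 t = z * f.2 t := hact.symm.trans hsmul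
  linear_combination -this

lemma fredholmDet_eq_zero_of_eigen (hH : IsFriedrichsModel H a v w) (hw : ∀ t, w t ≠ z)
    {f : ℂ × Lp ℂ 2 μ} (hf0 : f ≠ 0) (hf : H f = z • f) : fredholmDet μ a v w z = 0 := by
  have hf2 := hH.snd_ae_eq_of_eigen hw hf
  have hf1 : f.1 ≠ 0 := by
    intro hf1
    refine hf0 (Prod.ext hf1 (Lp.ext ?_))
    rw [Prod.snd_zero]
    filter_upwards [hf2, Lp.coeFn_zero ℂ 2 μ] with t ht h0
    rw [ht, h0, hf1, zero_mul, Pi.zero_apply]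
  have hint : ∫ t, v t * f.2 t ∂μ = -f.1 * ∫ t, v t ^ 2 / (w t - z) ∂μ := by
    rw [neg_mul, ← mul_neg, ← integral_mul_div_sub_eq_neg, ← integral_const_mul]
    refine integral_congr_ae ?_
    filter_upwards [hf2] with t ht
    rw [ht]
    ring
  have hfst : a * f.1 + ∫ t, v t * f.2 t ∂μ = z * f.1 := (hH f).1.symm.trans (congrArg Prod.fst hf)
  rw [hint] at hfst
  have : f.1 * fredholmDet μ a v w z = 0 := by
    unfold fredholmDet
    linear_combination hfst
  exact (mul_eq_zero.mp this).resolve_left hf1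

lemma eigen_of_fredholmDet_eq_zero (hH : IsFriedrichsModel H a v w) (hw : ∀ t, w t ≠ z)
    (hg : MemLp (fun t => v t / (z - w t)) 2 μ) (hΔ : fredholmDet μ a v w z = 0) :
    H (1, hg.toLp _) = z • (1, hg.toLp _) := by
  obtain ⟨hfst, hsnd⟩ := hH (1, hg.toLp _)
  refine Prod.ext ?_ (Lp.ext ?_)
  · have hint : ∫ t, v t * (hg.toLp _ : X → ℂ) t ∂μ = -∫ t, v t ^ 2 / (w t - z) ∂μ :=
      (integral_congr_ae (by filter_upwards [hg.coeFn_toLp] with t ht; rw [ht])).trans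
        (integral_mul_div_sub_eq_neg v w z)
    rw [hfst, Prod.smul_fst, smul_eq_mul]
    unfold fredholmDet at hΔ
    linear_combination hΔ + hint
  · filter_upwards [hsnd, hg.coeFn_toLp, Lp.coeFn_smul z (hg.toLp _)] with t hact hgt hsmul
    have hzw : z - w t ≠ 0 := sub_ne_zero.mpr (hw t).symm
    rw [hact, Prod.smul_snd, hsmul, Pi.smul_apply, hgt, smul_eq_mul]
    field_simp
    ring

theorem exists_eigen_iff_fredholmDet_eq_zero (hH : IsFriedrichsModel H a v w)
    (hw : ∀ t, w t ≠ z) (hg : MemLp (fun t => v t / (z - w t)) 2 μ) :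
    (∃ f : ℂ × Lp ℂ 2 μ, f ≠ 0 ∧ H f = z • f) ↔ fredholmDet μ a v w z = 0 :=
  ⟨fun ⟨_, hf0, hf⟩ => hH.fredholmDet_eq_zero_of_eigen hw hf0 hf,
    fun hΔ => ⟨_, fun h => one_ne_zero (congrArg Prod.fst h),
      hH.eigen_of_fredholmDet_eq_zero hw hg hΔ⟩⟩

end IsFriedrichsModel

end FriedrichsModel

lemma ofReal_ne_of_notMem_image_Icc_iInf_iSup {X : Type*} [TopologicalSpace X] [CompactSpace X]
    {f : X → ℝ} (hf : Continuous f) {z : ℂ}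
    (hz : z ∉ Complex.ofReal '' Set.Icc (⨅ t, f t) (⨆ t, f t)) (t : X) : (f t : ℂ) ≠ z :=
  fun h => hz ⟨f t, ⟨ciInf_le (isCompact_range hf).bddBelow t,
    le_ciSup (isCompact_range hf).bddAbove t⟩, h⟩

theorem eigenvalue_iff_fredholm_determinant_eq_zero_general
    (ν : ℕ) (w2 : Torus ν → Torus ν → ℝ) (w3 : Torus ν → Torus ν → Torus ν → ℝ)
    (v3 : Torus ν → ℝ)
    (hw3 : Continuous fun x : Torus ν × Torus ν × Torus ν => w3 x.1 x.2.1 x.2.2)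
    (hv3 : Continuous v3)
    (p q : Torus ν)
    (h3 : (ℂ × L2T ν) →L[ℂ] (ℂ × L2T ν))
    (hact : ∀ f : ℂ × L2T ν,
      (h3 f).1 = (w2 p q : ℂ) * f.1 + ∫ s, (v3 s : ℂ) * f.2 s ∧
      ((h3 f).2 : Torus ν → ℂ) =ᵐ[volume]
        fun t => (v3 t : ℂ) * f.1 + (w3 p q t : ℂ) * f.2 t)
    (z : ℂ)
    (hz : z ∉ Complex.ofReal '' Set.Icc (⨅ t, w3 p q t) (⨆ t, w3 p q t)) :
    (∃ f : ℂ × L2T ν, f ≠ 0 ∧ h3 f = z • f) ↔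
      (w2 p q : ℂ) - z - ∫ s, (v3 s : ℂ) ^ 2 / ((w3 p q s : ℂ) - z) = 0 := by
  have hw : Continuous (w3 p q) :=
    hw3.comp (continuous_const.prodMk (continuous_const.prodMk continuous_id))
  have hne := ofReal_ne_of_notMem_image_Icc_iInf_iSup hw hz
  have hg : MemLp (fun t => (v3 t : ℂ) / (z - w3 p q t)) 2 (volume : Measure (Torus ν)) :=
    Continuous.memLp_of_hasCompactSupport
      (by fun_prop (disch := exact fun t => sub_ne_zero.mpr (hne t).symm))
      (.of_compactSpace _)
  exact IsFriedrichsModel.exists_eigen_iff_fredholmDet_eq_zero hact hne hg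

/-- For `z` outside the interval `[min_t w3(p,q,t), max_t w3(p,q,t)]`, `z` is an eigenvalue of the
generalized Friedrichs model `h3(p,q)` iff the Fredholm determinant `Δ3(p,q;z)` vanishes. -/
theorem eigenvalue_iff_fredholm_determinant_eq_zero
    (ν : ℕ) (w2 : Torus ν → Torus ν → ℝ) (w3 : Torus ν → Torus ν → Torus ν → ℝ)
    (v3 : Torus ν → ℝ)
    (hw2 : Continuous fun x : Torus ν × Torus ν => w2 x.1 x.2)
    (hw3 : Continuous fun x : Torus ν × Torus ν × Torus ν => w3 x.1 x.2.1 x.2.2)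
    (hv3 : Continuous v3)
    (p q : Torus ν)
    (h3 : (ℂ × L2T ν) →L[ℂ] (ℂ × L2T ν))
    (hact : ∀ f : ℂ × L2T ν,
      (h3 f).1 = (w2 p q : ℂ) * f.1 + ∫ s, (v3 s : ℂ) * f.2 s ∧
      ((h3 f).2 : Torus ν → ℂ) =ᵐ[volume]
        fun t => (v3 t : ℂ) * f.1 + (w3 p q t : ℂ) * f.2 t)
    (z : ℂ)
    (hz : z ∉ Complex.ofReal '' Set.Icc (⨅ t, w3 p q t) (⨆ t, w3 p q t)) :
    (∃ f : ℂ × L2T ν, f ≠ 0 ∧ h3 f = z • f) ↔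
      (w2 p q : ℂ) - z - ∫ s, (v3 s : ℂ) ^ 2 / ((w3 p q s : ℂ) - z) = 0 :=
  eigenvalue_iff_fredholm_determinant_eq_zero_general ν w2 w3 v3 hw3 hv3 p q h3 hact z hz
end
end

section
/- Let H be a bounded self-adjoint 2×2 block operator matrix H = [[A, B],[B*, C]] on the orthogonal direct sum H₁ ⊕ H₂ of Hilbert spaces, where A : H₁ → H₁ and C : H₂ → H₂ are bounded self-adjoint and B : H₂ → H₁ is bounded. Then for every λ ∉ σ(C), λ ∈ σ(H) if and only if 0 ∈ σ(L(λ)), where L(λ) := A − λI − B (C − λI)⁻¹ B* is a bounded self-adjoint operator on H₁ (Frobenius–Schur complement characterization of the spectrum). -/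
/-!
For invertible `d` the block operator factors as
`[[a, b], [c, d]] = [[1, b d⁻¹], [0, 1]] * diag (a - b d⁻¹ c, d) * [[1, 0], [d⁻¹ c, 1]]`,
whose outer factors are unitriangular, hence invertible. So `[[a, b], [c, d]]` is invertible iff
its Schur complement `a - b d⁻¹ c` is; applying this to `H - λ` and `C - λ` gives the theorem once
`H` is transported from the `ℓ²`-sum `WithLp 2 (H₁ × H₂)` to the product `H₁ × H₂`.
-/

namespace ContinuousLinearMap

section Ring

variable {R E F X : Type*} [Ring R]
  [TopologicalSpace E] [AddCommGroup E] [IsTopologicalAddGroup E] [Module R E]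
  [TopologicalSpace F] [AddCommGroup F] [IsTopologicalAddGroup F] [Module R F]
  [TopologicalSpace X] [AddCommGroup X] [IsTopologicalAddGroup X] [Module R X]

def fromBlocks (a : E →L[R] E) (b : F →L[R] E) (c : E →L[R] F) (d : F →L[R] F) :
    E × F →L[R] E × F :=
  (a.coprod b).prod (c.coprod d)

@[simp]
theorem fromBlocks_apply (a : E →L[R] E) (b : F →L[R] E) (c : E →L[R] F) (d : F →L[R] F)
    (x : E × F) : fromBlocks a b c d x = (a x.1 + b x.2, c x.1 + d x.2) := rfl

@[simp]
theorem units_inv_apply_apply (u : (E →L[R] E)ˣ) (x : E) :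
    (↑u⁻¹ : E →L[R] E) ((u : E →L[R] E) x) = x :=
  congr($u.inv_mul x)

@[simp]
theorem units_apply_inv_apply (u : (E →L[R] E)ˣ) (x : E) :
    (u : E →L[R] E) ((↑u⁻¹ : E →L[R] E) x) = x :=
  congr($u.mul_inv x)

theorem isUnit_of_retract_of_isUnit {M : X →L[R] X} {a : E →L[R] E} {p : X →L[R] E}
    {i : E →L[R] X} (hpi : p ∘L i = 1) (hMi : M ∘L i = i ∘L a) (hpM : p ∘L M = a ∘L p)
    (hM : IsUnit M) : IsUnit a := by
  obtain ⟨⟨M, M', hMM', hM'M⟩, rfl⟩ := hM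
  refine ⟨⟨a, p ∘L M' ∘L i, ?_, ?_⟩, rfl⟩ <;> ext x
  · calc a (p (M' (i x))) = p (M (M' (i x))) := congr($hpM _).symm
      _ = p (i x) := congr(p ($hMM' (i x)))
      _ = x := congr($hpi x)
  · calc p (M' (i (a x))) = p (M' (M (i x))) := congr(p (M' $(congr($hMi x)))).symm
      _ = p (i x) := congr(p ($hM'M (i x)))
      _ = x := congr($hpi x)

theorem isUnit_prodMap_iff {a : E →L[R] E} {d : F →L[R] F} :
    IsUnit (a.prodMap d) ↔ IsUnit a ∧ IsUnit d := by
  refine ⟨fun h ↦ ⟨?_, ?_⟩, fun ⟨⟨u, hu⟩, ⟨v, hv⟩⟩ ↦ ?_⟩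
  · exact isUnit_of_retract_of_isUnit (p := fst R E F) (i := inl R E F) rfl
      (by ext <;> simp) (by ext <;> simp) h
  · exact isUnit_of_retract_of_isUnit (p := snd R E F) (i := inr R E F) rfl
      (by ext <;> simp) (by ext <;> simp) h
  · subst hu hv
    refine ⟨⟨_, (↑u⁻¹ : E →L[R] E).prodMap ↑v⁻¹, ?_, ?_⟩, rfl⟩ <;> ext <;> simp

theorem isUnit_fromBlocks_upper_unitriangular (b : F →L[R] E) : IsUnit (fromBlocks 1 b 0 1) :=
  ⟨⟨_, fromBlocks 1 (-b) 0 1, by ext <;> simp, by ext <;> simp⟩, rfl⟩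

theorem isUnit_fromBlocks_lower_unitriangular (c : E →L[R] F) : IsUnit (fromBlocks 1 0 c 1) :=
  ⟨⟨_, fromBlocks 1 0 (-c) 1, by ext <;> simp, by ext <;> simp⟩, rfl⟩

theorem fromBlocks_eq_mul_prodMap_mul (a : E →L[R] E) (b : F →L[R] E) (c : E →L[R] F)
    (u : (F →L[R] F)ˣ) :
    fromBlocks a b c u = fromBlocks 1 (b ∘L ↑u⁻¹) 0 1 *
      (a - b ∘L ↑u⁻¹ ∘L c).prodMap ↑u * fromBlocks 1 0 (↑u⁻¹ ∘L c) 1 := by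
  ext x <;> simp

theorem isUnit_fromBlocks_iff_isUnit_schur (a : E →L[R] E) (b : F →L[R] E) (c : E →L[R] F)
    {d : F →L[R] F} (hd : IsUnit d) :
    IsUnit (fromBlocks a b c d) ↔ IsUnit (a - b ∘L Ring.inverse d ∘L c) := by
  obtain ⟨u, rfl⟩ := hd
  obtain ⟨U, hU⟩ := isUnit_fromBlocks_upper_unitriangular (b ∘L (↑u⁻¹ : F →L[R] F))
  obtain ⟨V, hV⟩ := isUnit_fromBlocks_lower_unitriangular ((↑u⁻¹ : F →L[R] F) ∘L c)
  rw [fromBlocks_eq_mul_prodMap_mul, ← hU, ← hV, Units.isUnit_mul_units, Units.isUnit_units_mul,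
    isUnit_prodMap_iff, Ring.inverse_unit]
  exact and_iff_left u.isUnit

end Ring

section CommRing

variable {R E F : Type*} [CommRing R]
  [TopologicalSpace E] [AddCommGroup E] [IsTopologicalAddGroup E] [Module R E]
  [ContinuousConstSMul R E]
  [TopologicalSpace F] [AddCommGroup F] [IsTopologicalAddGroup F] [Module R F]
  [ContinuousConstSMul R F]

theorem fromBlocks_sub_smul_one (a : E →L[R] E) (b : F →L[R] E) (c : E →L[R] F)
    (d : F →L[R] F) (μ : R) :
    fromBlocks a b c d - μ • 1 = fromBlocks (a - μ • 1) b c (d - μ • 1) := by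
  ext <;> simp

theorem mem_spectrum_fromBlocks_iff (a : E →L[R] E) (b : F →L[R] E) (c : E →L[R] F)
    {d : F →L[R] F} {μ : R} (hμ : μ ∉ spectrum R d) :
    μ ∈ spectrum R (fromBlocks a b c d) ↔
      0 ∈ spectrum R (a - μ • 1 - b ∘L Ring.inverse (d - μ • 1) ∘L c) := by
  have hd : IsUnit (d - μ • 1) := by
    rwa [spectrum.notMem_iff, ← IsUnit.neg_iff, neg_sub, Algebra.algebraMap_eq_smul_one] at hμ
  rw [spectrum.zero_mem_iff, ← isUnit_fromBlocks_iff_isUnit_schur _ _ _ hd,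
    ← fromBlocks_sub_smul_one, spectrum.mem_iff, ← IsUnit.neg_iff, neg_sub,
    Algebra.algebraMap_eq_smul_one]

end CommRing

end ContinuousLinearMap

theorem spectrum_block_matrix_iff_schur_complement_general
    {H₁ H₂ : Type*}
    [NormedAddCommGroup H₁] [InnerProductSpace ℂ H₁] [CompleteSpace H₁]
    [NormedAddCommGroup H₂] [InnerProductSpace ℂ H₂] [CompleteSpace H₂]
    (A : H₁ →L[ℂ] H₁) (C : H₂ →L[ℂ] H₂) (B : H₂ →L[ℂ] H₁)
    (H : WithLp 2 (H₁ × H₂) →L[ℂ] WithLp 2 (H₁ × H₂))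
    (hH : ∀ x : WithLp 2 (H₁ × H₂),
      (WithLp.equiv 2 (H₁ × H₂)) (H x) =
        (A ((WithLp.equiv 2 (H₁ × H₂)) x).1 + B ((WithLp.equiv 2 (H₁ × H₂)) x).2,
         ContinuousLinearMap.adjoint B ((WithLp.equiv 2 (H₁ × H₂)) x).1 +
           C ((WithLp.equiv 2 (H₁ × H₂)) x).2))
    (lam : ℂ) (hlam : lam ∉ spectrum ℂ C) :
    lam ∈ spectrum ℂ H ↔
      (0 : ℂ) ∈ spectrum ℂ
        (A - lam • (1 : H₁ →L[ℂ] H₁) -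
          B ∘L Ring.inverse (C - lam • (1 : H₂ →L[ℂ] H₂)) ∘L ContinuousLinearMap.adjoint B) := by
  let conj := (WithLp.prodContinuousLinearEquiv 2 ℂ H₁ H₂).conjContinuousAlgEquiv
  have hconj : conj H = .fromBlocks A B (ContinuousLinearMap.adjoint B) C :=
    ContinuousLinearMap.ext fun x ↦ hH (WithLp.toLp 2 x)
  rw [← AlgEquiv.spectrum_eq conj H, hconj]
  exact ContinuousLinearMap.mem_spectrum_fromBlocks_iff A B _ hlam

/-- Frobenius–Schur complement characterization of the spectrum of a self-adjoint 2×2 block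
operator matrix: for `λ ∉ σ(C)`, `λ ∈ σ(H)` iff `0 ∈ σ(A − λ − B (C − λ)⁻¹ B*)`. -/
theorem spectrum_block_matrix_iff_schur_complement
    {H₁ H₂ : Type*}
    [NormedAddCommGroup H₁] [InnerProductSpace ℂ H₁] [CompleteSpace H₁]
    [NormedAddCommGroup H₂] [InnerProductSpace ℂ H₂] [CompleteSpace H₂]
    (A : H₁ →L[ℂ] H₁) (C : H₂ →L[ℂ] H₂) (B : H₂ →L[ℂ] H₁)
    (hA : IsSelfAdjoint A) (hC : IsSelfAdjoint C)
    (H : WithLp 2 (H₁ × H₂) →L[ℂ] WithLp 2 (H₁ × H₂))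
    (hH : ∀ x : WithLp 2 (H₁ × H₂),
      (WithLp.equiv 2 (H₁ × H₂)) (H x) =
        (A ((WithLp.equiv 2 (H₁ × H₂)) x).1 + B ((WithLp.equiv 2 (H₁ × H₂)) x).2,
         ContinuousLinearMap.adjoint B ((WithLp.equiv 2 (H₁ × H₂)) x).1 +
           C ((WithLp.equiv 2 (H₁ × H₂)) x).2))
    (lam : ℂ) (hlam : lam ∉ spectrum ℂ C) :
    lam ∈ spectrum ℂ H ↔
      (0 : ℂ) ∈ spectrum ℂ
        (A - lam • (1 : H₁ →L[ℂ] H₁) -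
          B ∘L Ring.inverse (C - lam • (1 : H₂ →L[ℂ] H₂)) ∘L ContinuousLinearMap.adjoint B) :=
  spectrum_block_matrix_iff_schur_complement_general A C B H hH lam hlam
end

section
/- Let w0 ∈ ℝ and let v1, w1 : T^ν → ℝ be continuous. Let h be the bounded self-adjoint operator on ℂ ⊕ L²(T^ν) defined by h(f0, f1) = (w0 f0 + ∫ v1(s) f1(s) ds, p ↦ v1(p) f0 + w1(p) f1(p)). Then the discrete spectrum of h outside the interval [min w1, max w1] consists exactly of the solutions z of the scalar equation w0 − z − ∫_{T^ν} v1(s)²/(w1(s) − z) ds = 0 with z ∉ [min w1, max w1]. -/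
/-
Writing f = (f₀, f₁), the second component of h f = z f reads v f₀ + (w − z) f₁ = 0, so away from
the range of w it forces f₁ = f₀ g with g = −v/(w − z). Substituting into the first component
leaves Δ(z) f₀ = 0 for Δ(z) = w₀ − z − ∫ v²/(w − z), and f₀ ≠ 0 for an eigenvector; conversely,
when Δ(z) = 0, the vector (1, g) is an eigenvector, as g is bounded.
-/

open MeasureTheory

noncomputable section

namespace Friedrichs

variable {X : Type*} {z : ℂ} {v w : X → ℂ}

def eigenfunction (v w : X → ℂ) (z : ℂ) (p : X) : ℂ := -v p / (w p - z)

theorem add_mul_eq_mul_iff_eq_mul_eigenfunction {p : X} (hp : w p ≠ z) (a b : ℂ) :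
    v p * a + w p * b = z * b ↔ b = a * eigenfunction v w z p := by
  have : w p - z ≠ 0 := sub_ne_zero.mpr hp
  rw [eigenfunction, ← mul_div_assoc, eq_div_iff this]
  constructor <;> intro h <;> linear_combination h

variable [MeasurableSpace X] {μ : Measure X} {w₀ : ℂ}

def IsModel (μ : Measure X) (w₀ : ℂ) (v w : X → ℂ) (h : ℂ × Lp ℂ 2 μ → ℂ × Lp ℂ 2 μ) : Prop :=
  ∀ f : ℂ × Lp ℂ 2 μ, (h f).1 = w₀ * f.1 + ∫ s, v s * f.2 s ∂μ ∧
    ((h f).2 : X → ℂ) =ᵐ[μ] fun p => v p * f.1 + w p * f.2 p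

def determinant (μ : Measure X) (w₀ : ℂ) (v w : X → ℂ) (z : ℂ) : ℂ :=
  w₀ - z - ∫ s, v s ^ 2 / (w s - z) ∂μ

theorem integral_mul_const_mul_eigenfunction (a : ℂ) :
    ∫ s, v s * (a * eigenfunction v w z s) ∂μ = -a * ∫ s, v s ^ 2 / (w s - z) ∂μ := by
  rw [← integral_const_mul]
  congr 1 with s
  rw [eigenfunction]
  ring

theorem IsModel.apply_eq_smul_iff {h : ℂ × Lp ℂ 2 μ → ℂ × Lp ℂ 2 μ}
    (hh : IsModel μ w₀ v w h) (hz : ∀ p, w p ≠ z) (f : ℂ × Lp ℂ 2 μ) :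
    h f = z • f ↔ (f.2 : X → ℂ) =ᵐ[μ] (fun p => f.1 * eigenfunction v w z p) ∧
      determinant μ w₀ v w z * f.1 = 0 := by
  obtain ⟨hfst, hsnd⟩ := hh f
  have hsnd_iff : (h f).2 = z • f.2 ↔
      (f.2 : X → ℂ) =ᵐ[μ] (fun p => f.1 * eigenfunction v w z p) := by
    rw [Lp.ext_iff]
    refine ⟨fun heq => ?_, fun heq => ?_⟩
    · filter_upwards [hsnd, heq, Lp.coeFn_smul z f.2] with p h₁ h₂ h₃
      rw [← add_mul_eq_mul_iff_eq_mul_eigenfunction (hz p), ← h₁, h₂, h₃, Pi.smul_apply,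
        smul_eq_mul]
    · filter_upwards [hsnd, heq, Lp.coeFn_smul z f.2] with p h₁ h₂ h₃
      rw [h₁, h₃, Pi.smul_apply, smul_eq_mul, add_mul_eq_mul_iff_eq_mul_eigenfunction (hz p), h₂]
  rw [Prod.ext_iff, Prod.smul_snd, hsnd_iff, Prod.smul_fst, smul_eq_mul, and_comm]
  refine and_congr_right fun hf₂ => ?_
  have hint : ∫ s, v s * f.2 s ∂μ = -f.1 * ∫ s, v s ^ 2 / (w s - z) ∂μ := by
    rw [← integral_mul_const_mul_eigenfunction]
    exact integral_congr_ae (hf₂.mono fun p hp => congrArg (v p * ·) hp)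
  rw [hfst, hint, determinant]
  constructor <;> intro h <;> linear_combination h

theorem IsModel.exists_eigenvector_iff {h : ℂ × Lp ℂ 2 μ → ℂ × Lp ℂ 2 μ}
    (hh : IsModel μ w₀ v w h) (hz : ∀ p, w p ≠ z) (hg : MemLp (eigenfunction v w z) 2 μ) :
    (∃ f, f ≠ 0 ∧ h f = z • f) ↔ determinant μ w₀ v w z = 0 := by
  constructor
  · rintro ⟨f, hf, hfz⟩
    obtain ⟨hf₂, hdet⟩ := (hh.apply_eq_smul_iff hz f).mp hfz
    refine (mul_eq_zero.mp hdet).resolve_right fun hf₁ => hf (Prod.ext hf₁ ?_)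
    refine Lp.ext (hf₂.trans ?_)
    filter_upwards [Lp.coeFn_zero ℂ 2 μ] with p hp
    rw [Prod.snd_zero, hp, hf₁, zero_mul, Pi.zero_apply]
  · intro hdet
    refine ⟨(1, hg.toLp _), fun h0 => one_ne_zero (congrArg Prod.fst h0),
      (hh.apply_eq_smul_iff hz _).mpr ⟨?_, by rw [hdet, zero_mul]⟩⟩
    simpa only [one_mul] using hg.coeFn_toLp

end Friedrichs

theorem ofReal_ne_of_notMem_image_Icc {ι : Type*} {w : ι → ℝ} (hb : BddBelow (Set.range w))
    (ha : BddAbove (Set.range w)) {z : ℂ}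
    (hz : z ∉ Complex.ofReal '' Set.Icc (⨅ p, w p) (⨆ p, w p)) (p : ι) : (w p : ℂ) ≠ z :=
  fun hp => hz ⟨w p, ⟨ciInf_le hb p, le_ciSup ha p⟩, hp⟩

/-- Discrete spectrum of the rank-one Friedrichs model on `ℂ ⊕ L²(T^ν)` outside the interval
`[min w1, max w1]`: `z` is an eigenvalue iff `w0 − z − ∫ v1(s)²/(w1(s) − z) ds = 0`. -/
theorem discrete_spectrum_friedrichs_model
    (ν : ℕ) (w0 : ℝ) (v1 w1 : Torus ν → ℝ)
    (hv1 : Continuous v1) (hw1 : Continuous w1)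
    (h : (ℂ × L2T ν) →L[ℂ] (ℂ × L2T ν))
    (hact : ∀ f : ℂ × L2T ν,
      (h f).1 = (w0 : ℂ) * f.1 + ∫ s, (v1 s : ℂ) * f.2 s ∧
      ((h f).2 : Torus ν → ℂ) =ᵐ[volume]
        fun p => (v1 p : ℂ) * f.1 + (w1 p : ℂ) * f.2 p)
    (z : ℂ) (hz : z ∉ Complex.ofReal '' Set.Icc (⨅ p, w1 p) (⨆ p, w1 p)) :
    (∃ f : ℂ × L2T ν, f ≠ 0 ∧ h f = z • f) ↔
      (w0 : ℂ) - z - ∫ s, (v1 s : ℂ) ^ 2 / ((w1 s : ℂ) - z) = 0 := by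
  have hne : ∀ p, (w1 p : ℂ) ≠ z := ofReal_ne_of_notMem_image_Icc
    (isCompact_range hw1).bddBelow (isCompact_range hw1).bddAbove hz
  have hg : Continuous (Friedrichs.eigenfunction (fun p => (v1 p : ℂ)) (fun p => (w1 p : ℂ)) z) :=
    (Complex.continuous_ofReal.comp hv1).neg.div
      ((Complex.continuous_ofReal.comp hw1).sub continuous_const) fun p => sub_ne_zero.mpr (hne p)
  exact Friedrichs.IsModel.exists_eigenvector_iff (h := h) hact hne
    (hg.memLp_of_hasCompactSupport (HasCompactSupport.of_compactSpace _))
end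
end

section
/- Let (V_n) be a sequence of pairwise disjoint measurable subsets of T^ν of positive measure, and let G : T^ν × T^ν → ℂ be a bounded measurable function. Then there exists an orthonormal sequence (k_n) in L²(T^ν) with supp k_n ⊆ V_n and ∬_{V_n × V_m} G(p, q) k_n(p) k_m(q) dp dq = 0 for all n ≠ m. -/
open MeasureTheory

noncomputable section

/-!
The vectors `kₙ` are chosen one after the other. Given `k₀, …, kₙ₋₁`, the two families of
conditions involving `kₙ` and an earlier `kᵢ` are finitely many linear conditions
`∫_{Vₙ} kₙ fⱼ = 0` with integrable `fⱼ` (Fubini), and such conditions have a common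
solution of norm one supported in `Vₙ` as soon as `Vₙ` carries an infinite-dimensional space
of bounded functions. On the torus the polynomials in the character `x ↦ exp (i x₀)` do: a
nonzero polynomial in it vanishes only on finitely many hyperplanes `{x₀ = a}`, a null set.
-/

open scoped Polynomial InnerProductSpace

theorem Module.exists_ne_zero_forall_eq_zero_of_not_finite {K E ι : Type*} [Field K]
    [AddCommGroup E] [Module K E] [Finite ι] (hE : ¬ Module.Finite K E) (ℓ : ι → E →ₗ[K] K) :
    ∃ x ≠ 0, ∀ i, ℓ i x = 0 := by
  by_contra! h
  refine hE (Module.Finite.of_injective (LinearMap.pi ℓ) ?_)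
  rw [← LinearMap.ker_eq_bot, LinearMap.ker_eq_bot']
  intro x hx
  by_contra hx0
  obtain ⟨i, hi⟩ := h x hx0
  exact hi (congrFun hx i)

theorem exists_seq_forall_fin_rec {X : Type*} {P : (n : ℕ) → (Fin n → X) → X → Prop}
    (h : ∀ n x, ∃ y, P n x y) : ∃ x : ℕ → X, ∀ n, P n (fun i => x i) (x n) := by
  choose next hnext using h
  refine ⟨fun n => Nat.strongRec (fun n prev => next n fun i => prev i i.isLt) n, fun n => ?_⟩
  dsimp only
  rw [Nat.strongRec_eq]
  exact hnext _ _

theorem exists_bound_eval_comp {α : Type*} {u : α → ℂ} {C : ℝ} (hC : ∀ x, ‖u x‖ ≤ C) (Q : ℂ[X]) :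
    ∃ B, ∀ x, ‖Q.eval (u x)‖ ≤ B := by
  obtain ⟨B, hB⟩ :=
    (isCompact_closedBall (0 : ℂ) C).exists_bound_of_continuousOn Q.continuous.continuousOn
  exact ⟨B, fun x => hB _ (mem_closedBall_zero_iff.2 (hC x))⟩

section PolynomialFunctions

variable {α : Type*} [MeasurableSpace α] {μ : Measure α} {u : α → ℂ} {C : ℝ}

theorem integrable_eval_comp_mul (hu : Measurable u) (hC : ∀ x, ‖u x‖ ≤ C) (Q : ℂ[X])
    {f : α → ℂ} (hf : Integrable f μ) : Integrable (fun x => Q.eval (u x) * f x) μ := by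
  obtain ⟨B, hB⟩ := exists_bound_eval_comp hC Q
  exact hf.bdd_mul (Q.continuous.measurable.comp hu).aestronglyMeasurable (ae_of_all _ hB)

theorem memLp_indicator_eval_comp [IsFiniteMeasure μ] (hu : Measurable u)
    (hC : ∀ x, ‖u x‖ ≤ C) {V : Set α} (hV : MeasurableSet V) (Q : ℂ[X]) (p : ENNReal) :
    MemLp (V.indicator fun x => Q.eval (u x)) p μ := by
  obtain ⟨B, hB⟩ := exists_bound_eval_comp hC Q
  exact (MemLp.of_bound (Q.continuous.measurable.comp hu).aestronglyMeasurable B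
    (ae_of_all _ hB)).indicator hV

theorem measure_setOf_isRoot_comp_eq_zero (hu0 : ∀ z, μ (u ⁻¹' {z}) = 0) {Q : ℂ[X]}
    (hQ : Q ≠ 0) : μ {x | Q.IsRoot (u x)} = 0 := by
  have hroots : {x | Q.IsRoot (u x)} = ⋃ z ∈ {z | Q.IsRoot z}, u ⁻¹' {z} := by ext; simp
  rw [hroots, measure_biUnion_null_iff (Polynomial.finite_setOfPred_isRoot hQ).countable]
  exact fun z _ => hu0 z

theorem not_indicator_eval_comp_ae_eq_zero (hu0 : ∀ z, μ (u ⁻¹' {z}) = 0) {V : Set α}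
    (hμV : μ V ≠ 0) {Q : ℂ[X]} (hQ : Q ≠ 0) :
    ¬ V.indicator (fun x => Q.eval (u x)) =ᵐ[μ] 0 := by
  intro h
  refine hμV (measure_mono_null_ae ?_ (measure_setOf_isRoot_comp_eq_zero hu0 hQ))
  filter_upwards [h] with x hx hxV
  exact (by simpa [Set.indicator_of_mem hxV] using hx : Q.eval (u x) = 0)

theorem exists_norm_eq_one_ae_eq_zero_integral_mul_eq_zero [IsFiniteMeasure μ]
    (hu : Measurable u) (hC : ∀ x, ‖u x‖ ≤ C) (hu0 : ∀ z, μ (u ⁻¹' {z}) = 0) {V : Set α}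
    (hV : MeasurableSet V) (hμV : μ V ≠ 0) {ι : Type*} [Finite ι] (f : ι → α → ℂ)
    (hf : ∀ i, IntegrableOn (f i) V μ) :
    ∃ g : Lp ℂ 2 μ, ‖g‖ = 1 ∧ (∀ᵐ x ∂μ, x ∉ V → g x = 0) ∧
      ∀ i, ∫ x in V, g x * f i x ∂μ = 0 := by
  let ℓ : ι → ℂ[X] →ₗ[ℂ] ℂ := fun i =>
    { toFun := fun Q => ∫ x in V, Q.eval (u x) * f i x ∂μ
      map_add' := fun P Q => by
        simp only [Polynomial.eval_add, add_mul]
        exact integral_add (integrable_eval_comp_mul hu hC P (hf i))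
          (integrable_eval_comp_mul hu hC Q (hf i))
      map_smul' := fun c Q => by
        simp only [Polynomial.eval_smul, smul_eq_mul, mul_assoc, integral_const_mul,
          RingHom.id_apply] }
  obtain ⟨Q, hQ, hℓQ⟩ := Module.exists_ne_zero_forall_eq_zero_of_not_finite Polynomial.not_finite ℓ
  have hmem := memLp_indicator_eval_comp (μ := μ) hu hC hV Q 2
  set g₀ := hmem.toLp _
  have hg₀coe : g₀ =ᵐ[μ] V.indicator fun x => Q.eval (u x) := hmem.coeFn_toLp
  have hg₀ : g₀ ≠ 0 := fun h => not_indicator_eval_comp_ae_eq_zero hu0 hμV hQ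
    (hg₀coe.symm.trans (Lp.eq_zero_iff_ae_eq_zero.1 h))
  have hcoe : ⇑((‖g₀‖⁻¹ : ℂ) • g₀) =ᵐ[μ] fun x => ‖g₀‖⁻¹ * V.indicator (fun x => Q.eval (u x)) x :=
    (Lp.coeFn_smul _ _).trans (hg₀coe.mono fun x hx => by simp [hx])
  refine ⟨(‖g₀‖⁻¹ : ℂ) • g₀, norm_smul_inv_norm hg₀, ?_, fun i => ?_⟩
  · filter_upwards [hcoe] with x hx hxV
    simp [hx, hxV]
  · calc ∫ x in V, ((‖g₀‖⁻¹ : ℂ) • g₀ : Lp ℂ 2 μ) x * f i x ∂μ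
        = ∫ x in V, ‖g₀‖⁻¹ * (Q.eval (u x) * f i x) ∂μ := by
          refine integral_congr_ae ?_
          filter_upwards [ae_restrict_of_ae hcoe, ae_restrict_mem hV] with x hx hxV
          simp [hx, hxV, mul_assoc]
      _ = 0 := by rw [integral_const_mul, show ∫ x in V, _ ∂μ = ℓ i Q from rfl, hℓQ, mul_zero]

end PolynomialFunctions

section Kernel

variable {α β : Type*} [MeasurableSpace α] [MeasurableSpace β] {μ : Measure α} {ν : Measure β}
  {G : α × β → ℂ} {C : ℝ}

theorem integrable_kernel_mul_mul (hG : AEStronglyMeasurable G (μ.prod ν))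
    (hGC : ∀ z, ‖G z‖ ≤ C) {f : α → ℂ} {g : β → ℂ} (hf : Integrable f μ) (hg : Integrable g ν) :
    Integrable (fun z => G z * f z.1 * g z.2) (μ.prod ν) := by
  simpa only [mul_assoc] using (hf.mul_prod hg).bdd_mul hG (ae_of_all _ hGC)

theorem integrable_integral_kernel_mul [IsFiniteMeasure μ] [SFinite ν]
    (hG : AEStronglyMeasurable G (μ.prod ν)) (hGC : ∀ z, ‖G z‖ ≤ C) {g : β → ℂ}
    (hg : Integrable g ν) : Integrable (fun x => ∫ y, G (x, y) * g y ∂ν) μ := by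
  simpa using (integrable_kernel_mul_mul hG hGC (integrable_const (1 : ℂ)) hg).integral_prod_left

end Kernel

theorem exists_norm_eq_one_ae_eq_zero_kernel_eq_zero {α : Type*} [MeasurableSpace α]
    {μ : Measure α} [IsFiniteMeasure μ] {u : α → ℂ} {C : ℝ} (hu : Measurable u)
    (hC : ∀ x, ‖u x‖ ≤ C) (hu0 : ∀ z, μ (u ⁻¹' {z}) = 0) {V : Set α} (hV : MeasurableSet V)
    (hμV : μ V ≠ 0) {G : α × α → ℂ} (hG : Measurable G) {C' : ℝ} (hGC : ∀ z, ‖G z‖ ≤ C')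
    {ι : Type*} [Finite ι] (W : ι → Set α) (h : ι → Lp ℂ 2 μ) :
    ∃ g : Lp ℂ 2 μ, ‖g‖ = 1 ∧ (∀ᵐ x ∂μ, x ∉ V → g x = 0) ∧ ∀ i,
      (∫ p in V, ∫ q in W i, G (p, q) * g p * h i q ∂μ ∂μ = 0) ∧
      ∫ p in W i, ∫ q in V, G (p, q) * h i p * g q ∂μ ∂μ = 0 := by
  have hL1 : ∀ (f : Lp ℂ 2 μ) (s : Set α), IntegrableOn f s μ := fun f s =>
    ((Lp.memLp f).integrable one_le_two).integrableOn
  have hGswap : ∀ z, ‖(G ∘ Prod.swap) z‖ ≤ C' := fun z => hGC z.swap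
  obtain ⟨g, hg1, hgV, hgf⟩ := exists_norm_eq_one_ae_eq_zero_integral_mul_eq_zero hu hC hu0 hV
    hμV (Sum.elim (fun i p => ∫ q in W i, G (p, q) * h i q ∂μ)
      (fun i q => ∫ p in W i, G (p, q) * h i p ∂μ))
    (Sum.rec (fun i => integrable_integral_kernel_mul hG.aestronglyMeasurable hGC (hL1 _ _))
      (fun i => integrable_integral_kernel_mul (hG.comp measurable_swap).aestronglyMeasurable
        hGswap (hL1 _ _)))
  refine ⟨g, hg1, hgV, fun i => ⟨?_, ?_⟩⟩
  · calc ∫ p in V, ∫ q in W i, G (p, q) * g p * h i q ∂μ ∂μ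
        = ∫ p in V, g p * ∫ q in W i, G (p, q) * h i q ∂μ ∂μ := by
          congr 1 with p
          rw [← integral_const_mul]
          congr 1 with q
          ring
      _ = 0 := hgf (Sum.inl i)
  · calc ∫ p in W i, ∫ q in V, G (p, q) * h i p * g q ∂μ ∂μ
        = ∫ q in V, ∫ p in W i, G (p, q) * h i p * g q ∂μ ∂μ :=
          integral_integral_swap (integrable_kernel_mul_mul hG.aestronglyMeasurable hGC
            (hL1 _ _) (hL1 _ _))
      _ = ∫ q in V, g q * ∫ p in W i, G (p, q) * h i p ∂μ ∂μ := by
          congr 1 with q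
          rw [← integral_const_mul]
          congr 1 with p
          ring
      _ = 0 := hgf (Sum.inr i)

theorem MeasureTheory.L2.inner_eq_zero_of_disjoint {α 𝕜 E : Type*} [MeasurableSpace α]
    {μ : Measure α} [RCLike 𝕜] [NormedAddCommGroup E] [InnerProductSpace 𝕜 E]
    {f g : Lp E 2 μ} {A B : Set α} (hAB : Disjoint A B) (hf : ∀ᵐ x ∂μ, x ∉ A → f x = 0)
    (hg : ∀ᵐ x ∂μ, x ∉ B → g x = 0) : ⟪f, g⟫_𝕜 = 0 := by
  rw [L2.inner_def]
  refine integral_eq_zero_of_ae ?_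
  filter_upwards [hf, hg] with x hfx hgx
  by_cases hxA : x ∈ A
  · simp [hgx (hAB.notMem_of_mem_left hxA)]
  · simp [hfx hxA]

instance AddCircle.nullSingletonClass_volume (T : ℝ) [Fact (0 < T)] :
    NullSingletonClass (volume : Measure (AddCircle T)) :=
  ⟨fun x => by simpa [Fact.out] using AddCircle.volume_closedBall T (x := x) 0⟩

theorem volume_preimage_toCircle_apply_singleton {ν : ℕ} (i : Fin ν) (z : ℂ) :
    volume ((fun x : Torus ν => (AddCircle.toCircle (x i) : ℂ)) ⁻¹' {z}) = 0 := by
  have hinj : Function.Injective fun a : AddCircle (2 * Real.pi) => (AddCircle.toCircle a : ℂ) :=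
    Circle.coe_injective.comp (AddCircle.injective_toCircle Real.two_pi_pos.ne')
  exact Measure.pi_eval_preimage_null (fun _ : Fin ν => (volume : Measure (AddCircle _)))
    ((Set.subsingleton_singleton.preimage hinj).measure_zero volume)

/-- Given pairwise disjoint sets `Vₙ` of positive measure and a bounded measurable kernel `G`,
there is an orthonormal sequence `kₙ` supported in `Vₙ` with
`∬_{Vₙ×Vₘ} G(p,q) kₙ(p) kₘ(q) dp dq = 0` for `n ≠ m`. -/
theorem exists_orthonormal_sequence_killing_kernel
    (ν : ℕ) (V : ℕ → Set (Torus ν))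
    (hVmeas : ∀ n, MeasurableSet (V n))
    (hVdisj : Pairwise (Function.onFun Disjoint V))
    (hVpos : ∀ n, 0 < volume (V n))
    (G : Torus ν × Torus ν → ℂ)
    (hGmeas : Measurable G)
    (hGbdd : ∃ Cb : ℝ, ∀ x, ‖G x‖ ≤ Cb) :
    ∃ k : ℕ → L2T ν,
      Orthonormal ℂ k ∧
      (∀ n, ∀ᵐ p, p ∉ V n → (k n : Torus ν → ℂ) p = 0) ∧
      ∀ n m, n ≠ m →
        ∫ p in V n, ∫ q in V m, G (p, q) * (k n : Torus ν → ℂ) p * (k m : Torus ν → ℂ) q = 0 := by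
  obtain ⟨i₀⟩ : Nonempty (Fin ν) := by
    by_contra! hν
    obtain ⟨x, hx⟩ := nonempty_of_measure_ne_zero (hVpos 0).ne'
    obtain ⟨y, hy⟩ := nonempty_of_measure_ne_zero (hVpos 1).ne'
    exact Set.disjoint_left.1 (hVdisj zero_ne_one) hx (Subsingleton.elim x y ▸ hy)
  obtain ⟨C, hGC⟩ := hGbdd
  have hu : Continuous fun x : Torus ν => (AddCircle.toCircle (x i₀) : ℂ) :=
    continuous_subtype_val.comp (AddCircle.continuous_toCircle.comp (continuous_apply i₀))
  obtain ⟨k, hk⟩ := exists_seq_forall_fin_rec fun n (prev : Fin n → L2T ν) =>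
    exists_norm_eq_one_ae_eq_zero_kernel_eq_zero hu.measurable (fun x => (Circle.norm_coe _).le)
      (volume_preimage_toCircle_apply_singleton i₀) (hVmeas n) (hVpos n).ne' hGmeas hGC
      (fun i : Fin n => V i) prev
  refine ⟨k, ⟨fun n => (hk n).1, fun n m hnm =>
    L2.inner_eq_zero_of_disjoint (hVdisj hnm) (hk n).2.1 (hk m).2.1⟩, fun n => (hk n).2.1, ?_⟩
  intro n m hnm
  rcases hnm.lt_or_gt with h | h
  · exact ((hk m).2.2 ⟨n, h⟩).2
  · exact ((hk n).2.2 ⟨m, h⟩).1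
end
end
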